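/- arXiv:1609.05507 — 2 statements merged into one kernel-verified Lean document; each statement's English description precedes it below -/
import Mathlib

section
/- Let H be a Hilbert space, F : H →L[ℂ] H a linear contraction, and u ∈ H. Suppose the Cesàro averages (1/t) ∑_{i=1}^{t} ⟨Fⁱu, v⟩ converge for every v ∈ H, defining a bounded linear functional φ. Then the vector w representing φ (via Riesz representation) satisfies Fw = w. -/
/-!
Since `⟪F w, v⟫ = ⟪w, F† v⟫ = φ (F† v)` and `⟪Fⁱ u, F† v⟫ = ⟪Fⁱ⁺¹ u, v⟫`, the averages defining
`φ (F† v)` are those defining `φ v` with the index shifted by one, and an index shift does not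
change the limit of Cesàro averages.
-/

open Filter Topology Finset

theorem Finset.sum_Icc_one_comp_succ {M : Type*} [AddCommGroup M] (g : ℕ → M) (t : ℕ) :
    ∑ i ∈ Icc 1 t, g (i + 1) = ∑ i ∈ Icc 1 (t + 1), g i - g 1 := by
  induction t with
  | zero => simp
  | succ n ih =>
    rw [sum_Icc_succ_top (by omega), sum_Icc_succ_top (by omega : 1 ≤ n + 1 + 1), ih]
    abel

theorem Filter.Tendsto.cesaro_comp_succ {𝕜 : Type*} [RCLike 𝕜] {g : ℕ → 𝕜} {L : 𝕜}
    (h : Tendsto (fun t : ℕ => (1 / (t : 𝕜)) * ∑ i ∈ Icc 1 t, g i) atTop (𝓝 L)) :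
    Tendsto (fun t : ℕ => (1 / (t : 𝕜)) * ∑ i ∈ Icc 1 t, g (i + 1)) atTop (𝓝 L) := by
  have hinv : Tendsto (fun t : ℕ => 1 / (t : 𝕜)) atTop (𝓝 0) :=
    tendsto_one_div_atTop_nhds_zero_nat
  have hfactor : Tendsto (fun t : ℕ => 1 + 1 / (t : 𝕜)) atTop (𝓝 1) := by
    simpa using tendsto_const_nhds.add hinv
  -- the shifted average at `t` is `(1 + 1/t)` times the unshifted one at `t + 1`, minus `g 1 / t`
  have hlim := (hfactor.mul ((tendsto_add_atTop_iff_nat 1).2 h)).sub (hinv.mul_const (g 1))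
  rw [one_mul, zero_mul, sub_zero] at hlim
  refine hlim.congr' ((eventually_ne_atTop 0).mono fun t ht => ?_)
  dsimp only
  have ht' : (t : 𝕜) ≠ 0 := Nat.cast_ne_zero.2 ht
  rw [sum_Icc_one_comp_succ]
  push_cast
  field_simp

theorem riesz_vector_is_fixed_point_general
    {H : Type*} [NormedAddCommGroup H] [InnerProductSpace ℂ H] [CompleteSpace H]
    (F : H →L[ℂ] H) (u : H)
    (φ : H → ℂ)
    (hφ : ∀ v : H, Filter.Tendsto
      (fun t : ℕ => (1 / (t : ℂ)) * ∑ i ∈ Finset.Icc 1 t, (inner ℂ ((F ^ i) u) v : ℂ))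
      Filter.atTop (nhds (φ v)))
    (w : H) (hw : ∀ v : H, (inner ℂ w v : ℂ) = φ v) :
    F w = w := by
  refine ext_inner_right ℂ fun v => ?_
  have hadjoint : Tendsto
      (fun t : ℕ => (1 / (t : ℂ)) * ∑ i ∈ Icc 1 t, inner ℂ ((F ^ (i + 1)) u) v)
      atTop (𝓝 (φ (F.adjoint v))) := by
    simpa only [ContinuousLinearMap.adjoint_inner_right, pow_succ', mul_apply_eq_comp]
      using hφ (F.adjoint v)
  calc inner ℂ (F w) v = inner ℂ w (F.adjoint v) := (F.adjoint_inner_right w v).symm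
    _ = φ (F.adjoint v) := hw _
    _ = φ v := tendsto_nhds_unique hadjoint (hφ v).cesaro_comp_succ
    _ = inner ℂ w v := (hw v).symm

theorem riesz_vector_is_fixed_point
    {H : Type*} [NormedAddCommGroup H] [InnerProductSpace ℂ H] [CompleteSpace H]
    (F : H →L[ℂ] H) (hF : ‖F‖ ≤ 1) (u : H)
    (φ : H → ℂ)
    (hφ : ∀ v : H, Filter.Tendsto
      (fun t : ℕ => (1 / (t : ℂ)) * ∑ i ∈ Finset.Icc 1 t, (inner ℂ ((F ^ i) u) v : ℂ))
      Filter.atTop (nhds (φ v)))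
    (w : H) (hw : ∀ v : H, (inner ℂ w v : ℂ) = φ v) :
    F w = w :=
  riesz_vector_is_fixed_point_general F u φ hφ w hw
end

section
/- (Gap detection by geometric grid) Let p, q ∈ (0, 1] with p + q ≥ ε > 0 and p ≥ 2q. Then there exists an integer k with −1 ≤ k ≤ ⌈log_{1.1}(2/ε)⌉ such that p > 1.1^k · ε/2 and q ≤ 1.1^{k−1} · ε/2. -/
theorem gap_detection_geometric_grid
    (p q ε : ℝ) (hp0 : 0 < p) (hp1 : p ≤ 1) (hq0 : 0 < q) (hq1 : q ≤ 1)
    (hε : 0 < ε) (hεle : ε ≤ p + q) (hgap : p ≥ 2 * q) :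
    ∃ k : ℤ, -1 ≤ k ∧ (k : ℝ) ≤ ⌈Real.logb 1.1 (2 / ε)⌉ ∧
      p > (1.1 : ℝ) ^ k * (ε / 2) ∧ q ≤ (1.1 : ℝ) ^ (k - 1) * (ε / 2) := by
  have hb : (1:ℝ) < 1.1 := by norm_num
  have hb0 : (0:ℝ) < 1.1 := by norm_num
  have hx0 : (0:ℝ) < 2 * q / ε := by positivity
  set x : ℝ := Real.logb 1.1 (2 * q / ε) with hxdef
  set m : ℤ := ⌈x⌉ + 1 with hm
  set k : ℤ := max (-1) m with hk
  have hzrp : ∀ j : ℤ, (1.1:ℝ) ^ j = (1.1:ℝ) ^ (j:ℝ) := fun j => (Real.rpow_intCast _ _).symm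
  have hrpx : (1.1:ℝ) ^ x = 2 * q / ε := Real.rpow_logb hb0 (by norm_num) hx0
  -- q bound: k - 1 ≥ ⌈x⌉ ≥ x
  have hq_le : q ≤ (1.1:ℝ) ^ (k - 1) * (ε / 2) := by
    have h1 : x ≤ ((k - 1 : ℤ) : ℝ) := by
      have : (⌈x⌉ : ℤ) ≤ k - 1 := by
        have := le_max_right (-1 : ℤ) m; omega
      calc x ≤ (⌈x⌉ : ℝ) := Int.le_ceil x
        _ ≤ ((k - 1 : ℤ) : ℝ) := by exact_mod_cast this
    have h2 : 2 * q / ε ≤ (1.1:ℝ) ^ ((k - 1 : ℤ) : ℝ) := by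
      rw [← hrpx]; exact (Real.rpow_le_rpow_left_iff hb).2 h1
    rw [hzrp]
    rw [div_le_iff₀ hε] at h2
    nlinarith
  have hp_gt : p > (1.1:ℝ) ^ k * (ε / 2) := by
    rcases le_or_gt (-1) m with hcase | hcase
    · have hkm : k = m := max_eq_right hcase
      have h1 : ((m - 2 : ℤ) : ℝ) < x := by
        have : (⌈x⌉ : ℝ) < x + 1 := Int.ceil_lt_add_one x
        push_cast [hm]; linarith
      have h2 : (1.1:ℝ) ^ ((m - 2 : ℤ) : ℝ) < 2 * q / ε := by
        rw [← hrpx]; exact (Real.rpow_lt_rpow_left_iff hb).2 h1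
      have h3 : (1.1:ℝ) ^ ((m : ℤ) : ℝ) = (1.1:ℝ) ^ ((m - 2 : ℤ) : ℝ) * 1.21 := by
        rw [show ((m : ℤ) : ℝ) = ((m - 2 : ℤ) : ℝ) + 2 by push_cast; ring,
          Real.rpow_add hb0]
        norm_num
      have hpos : (0:ℝ) < (1.1:ℝ) ^ ((m - 2 : ℤ) : ℝ) := Real.rpow_pos_of_pos hb0 _
      rw [lt_div_iff₀ hε] at h2
      rw [hkm, hzrp, h3]
      nlinarith
    · have hkm : k = -1 := max_eq_left (by omega)
      have hq2 : q ≤ (1.1:ℝ) ^ ((-2 : ℤ)) * (ε / 2) := by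
        rw [hkm] at hq_le; norm_num at hq_le ⊢; exact hq_le
      have hz2 : (1.1:ℝ) ^ ((-2 : ℤ)) = 1 / 1.21 := by norm_num
      have hz1 : (1.1:ℝ) ^ ((-1 : ℤ)) = 1 / 1.1 := by norm_num
      rw [hkm, hz1]
      rw [hz2] at hq2
      nlinarith
  refine ⟨k, le_max_left _ _, ?_, hp_gt, hq_le⟩
  -- upper bound
  have hbk : (1.1:ℝ) ^ ((k:ℤ):ℝ) < 2 / ε := by
    have hpos : (0:ℝ) < (1.1:ℝ) ^ ((k:ℤ):ℝ) := Real.rpow_pos_of_pos hb0 _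
    rw [lt_div_iff₀ hε]
    rw [hzrp] at hp_gt
    nlinarith
  have : ((k:ℤ):ℝ) < Real.logb 1.1 (2 / ε) := by
    calc ((k:ℤ):ℝ) = Real.logb 1.1 ((1.1:ℝ) ^ ((k:ℤ):ℝ)) :=
          (Real.logb_rpow hb0 (by norm_num)).symm
      _ < Real.logb 1.1 (2 / ε) :=
          Real.logb_lt_logb hb (Real.rpow_pos_of_pos hb0 _) hbk
  calc ((k:ℤ):ℝ) ≤ Real.logb 1.1 (2 / ε) := this.le
    _ ≤ (⌈Real.logb 1.1 (2 / ε)⌉ : ℝ) := Int.le_ceil _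
end
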